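/- Let n, m be positive integers, A an n×n real matrix, B an n×m real matrix, Q a positive semidefinite n×n real matrix, R a positive definite m×m real matrix, and M a positive semidefinite n×n real matrix. Then the Riccati update Q + AᵀMA − AᵀMB(R + BᵀMB)^{−1}BᵀMA is positive semidefinite. -/

import Mathlib

open Matrix

/-- The Riccati update `M ↦ Q + AᵀMA − AᵀMB(R + BᵀMB)⁻¹BᵀMA` maps positive
semidefinite matrices to positive semidefinite matrices (with `Q ⪰ 0`, `R ≻ 0`). -/
theorem riccati_update_posSemidef {n m : ℕ} (hn : 0 < n) (hm : 0 < m)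
    (A : Matrix (Fin n) (Fin n) ℝ) (B : Matrix (Fin n) (Fin m) ℝ)
    (Q : Matrix (Fin n) (Fin n) ℝ) (hQ : Q.PosSemidef)
    (R : Matrix (Fin m) (Fin m) ℝ) (hR : R.PosDef)
    (M : Matrix (Fin n) (Fin n) ℝ) (hM : M.PosSemidef) :
    (Q + Aᵀ * M * A - Aᵀ * M * B * (R + Bᵀ * M * B)⁻¹ * (Bᵀ * M * A)).PosSemidef := by
  have hMt : Mᵀ = M := hM.isHermitian
  have hBMB : (Bᵀ * M * B).PosSemidef := by
    simpa [conjTranspose_eq_transpose_of_trivial] using hM.conjTranspose_mul_mul_same B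
  have hS : (R + Bᵀ * M * B).PosDef := hR.add_posSemidef hBMB
  haveI : Invertible (R + Bᵀ * M * B) := hS.isUnit.invertible
  -- block matrix [[M, MB],[BᵀM, R+BᵀMB]] is PSD
  have h1 : (fromBlocks M (M * B) ((M * B)ᴴ) (Bᵀ * M * B)).PosSemidef := by
    have := hM.conjTranspose_mul_mul_same (fromCols (1 : Matrix (Fin n) (Fin n) ℝ) B)
    simpa [conjTranspose_eq_transpose_of_trivial, transpose_fromCols, fromRows_mul,
      fromRows_mul_fromCols, hMt, Matrix.mul_assoc] using this
  have h2 : (fromBlocks (0 : Matrix (Fin n) (Fin n) ℝ) (0 : Matrix (Fin n) (Fin m) ℝ)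
      (0 : Matrix (Fin m) (Fin n) ℝ) R).PosSemidef := by
    have e2 : fromBlocks (0 : Matrix (Fin n) (Fin n) ℝ) (0 : Matrix (Fin n) (Fin m) ℝ)
        (0 : Matrix (Fin m) (Fin n) ℝ) R
        = (fromCols (0 : Matrix (Fin m) (Fin n) ℝ) (1 : Matrix (Fin m) (Fin m) ℝ))ᴴ * R *
          fromCols (0 : Matrix (Fin m) (Fin n) ℝ) (1 : Matrix (Fin m) (Fin m) ℝ) := by
      rw [conjTranspose_eq_transpose_of_trivial, transpose_fromCols, fromRows_mul,
        fromRows_mul_fromCols]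
      simp
    rw [e2]
    exact hR.posSemidef.conjTranspose_mul_mul_same _
  have hblock : (fromBlocks M (M * B) ((M * B)ᴴ) (R + Bᵀ * M * B)).PosSemidef := by
    have := h1.add h2
    simpa [fromBlocks_add, add_comm] using this
  have hschur : (M - (M * B) * (R + Bᵀ * M * B)⁻¹ * (M * B)ᴴ).PosSemidef :=
    (PosDef.fromBlocks₂₂ M (M * B) hS).mp hblock
  have key : (Aᵀ * (M - (M * B) * (R + Bᵀ * M * B)⁻¹ * (M * B)ᴴ) * A).PosSemidef := by
    simpa [conjTranspose_eq_transpose_of_trivial] using hschur.conjTranspose_mul_mul_same A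
  have heq : Q + Aᵀ * M * A - Aᵀ * M * B * (R + Bᵀ * M * B)⁻¹ * (Bᵀ * M * A)
      = Q + Aᵀ * (M - (M * B) * (R + Bᵀ * M * B)⁻¹ * (M * B)ᴴ) * A := by
    simp only [conjTranspose_eq_transpose_of_trivial, transpose_mul, hMt]
    simp only [Matrix.mul_sub, Matrix.sub_mul, Matrix.mul_assoc]
    abel
  rw [heq]
  exact hQ.add key
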